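/- Let $1<q<p<\infty$, $\frac1r:=\frac1q-\frac1p$, and let $T$ be a Calderón–Zygmund operator with kernel satisfying the standard size and Dini-regularity conditions. If $b\in C_c^1(\mathbb{R}^n)$ with $\mathrm{supp}(b)\subset B(0,R_0)$, then for every $\eta>0$ the operator $[b,T]-[b,T_\eta]$ is bounded from $L^p(\mathbb{R}^n)$ to $L^q(\mathbb{R}^n)$ with operator norm at most $C\,\eta\,\|\nabla b\|_\infty (R_0+\eta)^{n/r}$; in particular $\lim_{\eta\to0^+}\|[b,T]-[b,T_\eta]\|_{p\to q}=0$. -/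

import Mathlib

open MeasureTheory ENNReal NNReal Metric Set Filter

/-- `commDiff K φ b η f` is the difference `[b,T](f) - [b,T_η](f)`, which has the
absolutely convergent integral representation
`x ↦ ∫ (b(x)-b(y)) K(x,y) φ(|x-y|/η) f(y) dy`. -/
noncomputable def commDiff {n : ℕ}
    (K : EuclideanSpace ℝ (Fin n) → EuclideanSpace ℝ (Fin n) → ℂ)
    (φ : ℝ → ℝ) (b : EuclideanSpace ℝ (Fin n) → ℝ) (η : ℝ)
    (f : EuclideanSpace ℝ (Fin n) → ℂ) (x : EuclideanSpace ℝ (Fin n)) : ℂ :=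
  ∫ y, (((b x - b y : ℝ) : ℂ) * K x y * ((φ (dist x y / η) : ℝ) : ℂ)) * f y

lemma my_schur {α : Type*} [MeasurableSpace α] (μ : Measure α) [SigmaFinite μ]
    (k : α → α → ℝ≥0∞) (hk : Measurable (Function.uncurry k))
    (h : α → ℝ≥0∞) (hh : Measurable h) (A : ℝ≥0∞)
    (hA1 : ∀ x, ∫⁻ y, k x y ∂μ ≤ A) (hA2 : ∀ y, ∫⁻ x, k x y ∂μ ≤ A)
    {p : ℝ} (hp : 1 < p) :
    ∫⁻ x, (∫⁻ y, k x y * h y ∂μ) ^ p ∂μ ≤ A ^ p * ∫⁻ y, h y ^ p ∂μ := by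
  have hp0 : 0 < p := lt_trans one_pos hp
  have hc : (p / (p - 1)).HolderConjugate p := (Real.HolderConjugate.conjExponent hp).symm
  set p' : ℝ := p / (p - 1) with hp'def
  have hp'0 : 0 < p' := hc.pos
  have hinv : 1 / p' + 1 / p = 1 := by simpa [one_div] using hc.inv_add_inv_eq_one
  have hexp : (1 / p') * p = p - 1 := by
    have h1 : 1 / p' = 1 - 1 / p := by linarith
    rw [h1]
    field_simp
  -- pointwise Hölder
  have key : ∀ x, (∫⁻ y, k x y * h y ∂μ) ^ p ≤
      A ^ (p - 1) * ∫⁻ y, k x y * h y ^ p ∂μ := by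
    intro x
    have hkx : Measurable (k x) := hk.of_uncurry_left
    have step1 : ∫⁻ y, k x y * h y ∂μ ≤
        (∫⁻ y, k x y ∂μ) ^ (1 / p') * (∫⁻ y, k x y * h y ^ p ∂μ) ^ (1 / p) := by
      have H := ENNReal.lintegral_mul_le_Lp_mul_Lq μ hc
        (f := fun y => k x y ^ (1 / p')) (g := fun y => k x y ^ (1 / p) * h y)
        ((hkx.pow_const _).aemeasurable) (((hkx.pow_const _).mul hh).aemeasurable)
      have e1 : ∀ y, k x y ^ (1 / p') * (k x y ^ (1 / p) * h y) = k x y * h y := by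
        intro y
        have : k x y ^ (1 / p') * k x y ^ (1 / p) = k x y := by
          rw [← ENNReal.rpow_add_of_nonneg _ _ (by positivity) (by positivity), hinv,
            ENNReal.rpow_one]
        rw [← mul_assoc, this]
      have e2 : ∀ y, (k x y ^ (1 / p')) ^ p' = k x y := by
        intro y
        rw [← ENNReal.rpow_mul, one_div, inv_mul_cancel₀ (ne_of_gt hp'0), ENNReal.rpow_one]
      have e3 : ∀ y, (k x y ^ (1 / p) * h y) ^ p = k x y * h y ^ p := by
        intro y
        rw [ENNReal.mul_rpow_of_nonneg _ _ (le_of_lt hp0), ← ENNReal.rpow_mul, one_div,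
          inv_mul_cancel₀ (ne_of_gt hp0), ENNReal.rpow_one]
      calc ∫⁻ y, k x y * h y ∂μ
          = ∫⁻ y, ((fun y => k x y ^ (1 / p')) * fun y => k x y ^ (1 / p) * h y) y ∂μ := by
            simp only [Pi.mul_apply]; exact lintegral_congr fun y => (e1 y).symm
        _ ≤ _ := H
        _ = (∫⁻ y, k x y ∂μ) ^ (1 / p') * (∫⁻ y, k x y * h y ^ p ∂μ) ^ (1 / p) := by
            simp_rw [e2, e3]
    calc (∫⁻ y, k x y * h y ∂μ) ^ p
        ≤ ((∫⁻ y, k x y ∂μ) ^ (1 / p') * (∫⁻ y, k x y * h y ^ p ∂μ) ^ (1 / p)) ^ p :=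
          ENNReal.rpow_le_rpow step1 (le_of_lt hp0)
      _ = (∫⁻ y, k x y ∂μ) ^ (p - 1) * ∫⁻ y, k x y * h y ^ p ∂μ := by
          rw [ENNReal.mul_rpow_of_nonneg _ _ (le_of_lt hp0), ← ENNReal.rpow_mul,
            ← ENNReal.rpow_mul, hexp, one_div, inv_mul_cancel₀ (ne_of_gt hp0),
            ENNReal.rpow_one]
      _ ≤ A ^ (p - 1) * ∫⁻ y, k x y * h y ^ p ∂μ :=
          mul_le_mul_left (by
            have := ENNReal.rpow_le_rpow (hA1 x) (show (0:ℝ) ≤ p - 1 by linarith)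
            exact this) _
  have hmeas : Measurable fun x => ∫⁻ y, k x y * h y ^ p ∂μ := by
    apply Measurable.lintegral_prod_right (f := fun x y => k x y * h y ^ p)
    exact hk.mul ((hh.comp measurable_snd).pow_const p)
  have halg : A ^ (p - 1) * A = A ^ p := by
    have h1 : A ^ (p - 1) * A ^ (1 : ℝ) = A ^ p := by
      rw [← ENNReal.rpow_add_of_nonneg _ _ (by linarith) zero_le_one]
      ring_nf
    rwa [ENNReal.rpow_one] at h1
  calc ∫⁻ x, (∫⁻ y, k x y * h y ∂μ) ^ p ∂μ
      ≤ ∫⁻ x, A ^ (p - 1) * ∫⁻ y, k x y * h y ^ p ∂μ ∂μ := lintegral_mono key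
    _ = A ^ (p - 1) * ∫⁻ x, ∫⁻ y, k x y * h y ^ p ∂μ ∂μ := lintegral_const_mul _ hmeas
    _ = A ^ (p - 1) * ∫⁻ y, ∫⁻ x, k x y * h y ^ p ∂μ ∂μ := by
        rw [lintegral_lintegral_swap]
        exact (hk.mul ((hh.comp measurable_snd).pow_const p)).aemeasurable
    _ ≤ A ^ (p - 1) * ∫⁻ y, A * h y ^ p ∂μ := by
        refine mul_le_mul_right (lintegral_mono fun y => ?_) _
        calc ∫⁻ x, k x y * h y ^ p ∂μ = (∫⁻ x, k x y ∂μ) * h y ^ p :=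
              lintegral_mul_const'' _ (hk.of_uncurry_right).aemeasurable
          _ ≤ A * h y ^ p := mul_le_mul_left (hA2 y) _
    _ = A ^ p * ∫⁻ y, h y ^ p ∂μ := by
        rw [lintegral_const_mul'' _ ((hh.pow_const p).aemeasurable), ← mul_assoc, halg]

lemma my_ker_int (n : ℕ) {η : ℝ} (hη : 0 < η) :
    ∫⁻ z in ball (0 : EuclideanSpace ℝ (Fin n)) η,
      ENNReal.ofReal (‖z‖ * ‖z‖ ^ (-(n : ℝ))) ≤
    ENNReal.ofReal (2 ^ (n + 1) * η) * volume (ball (0 : EuclideanSpace ℝ (Fin n)) 1) := by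
  set E := EuclideanSpace ℝ (Fin n)
  set g : E → ℝ≥0∞ := fun z => ENNReal.ofReal (‖z‖ * ‖z‖ ^ (-(n : ℝ))) with hg
  set V := volume (ball (0 : E) 1) with hV
  set D : ℕ → Set E := fun j => ball 0 (η / 2 ^ j) \ ball 0 (η / 2 ^ (j + 1)) with hD
  -- covering
  have hcover : ball (0 : E) η ⊆ {0} ∪ ⋃ j, D j := by
    intro z hz
    rcases eq_or_ne z 0 with rfl | hz0
    · exact Or.inl rfl
    refine Or.inr ?_
    have hz' : 0 < ‖z‖ := norm_pos_iff.2 hz0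
    have hzlt : ‖z‖ < η := by simpa [mem_ball_zero_iff] using hz
    have hex : ∃ j : ℕ, η / 2 ^ j ≤ ‖z‖ := by
      obtain ⟨m, hm⟩ := pow_unbounded_of_one_lt (η / ‖z‖) (one_lt_two (α := ℝ))
      exact ⟨m, by rw [div_le_iff₀ (by positivity)]
                   rw [div_lt_iff₀ hz'] at hm
                   linarith [hm]⟩
    classical
    have hj₀ : η / 2 ^ (Nat.find hex) ≤ ‖z‖ := Nat.find_spec hex
    have hj₀0 : Nat.find hex ≠ 0 := by
      intro h0
      rw [h0] at hj₀; simp at hj₀; linarith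
    obtain ⟨j, hjj⟩ : ∃ j, Nat.find hex = j + 1 :=
      ⟨Nat.find hex - 1, (Nat.succ_pred_eq_of_pos (Nat.pos_of_ne_zero hj₀0)).symm⟩
    have hlt : ¬ (η / 2 ^ j ≤ ‖z‖) := Nat.find_min hex (by omega)
    rw [hjj] at hj₀
    refine mem_iUnion.2 ⟨j, ?_, ?_⟩
    · exact mem_ball_zero_iff.2 (lt_of_not_ge hlt)
    · simp only [mem_ball_zero_iff, not_lt]
      exact hj₀
  have hsing : ∫⁻ z in ({0} : Set E), g z = 0 := by
    rw [lintegral_singleton]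
    have : g 0 = 0 := by rw [hg]; dsimp only; rw [show ‖(0:E)‖ = 0 from norm_zero, zero_mul, ENNReal.ofReal_zero]
    rw [this, zero_mul]
  -- per-annulus bound
  have hterm : ∀ j : ℕ, ∫⁻ z in D j, g z ≤ ENNReal.ofReal (η / 2 ^ j * 2 ^ n) * V := by
    intro j
    have hrj : (0:ℝ) < η / 2 ^ j := by positivity
    have hrj1 : (0:ℝ) < η / 2 ^ (j + 1) := by positivity
    have hDmeas : MeasurableSet (D j) := measurableSet_ball.diff measurableSet_ball
    have hgb : ∀ z ∈ D j, g z ≤ ENNReal.ofReal (η / 2 ^ j * (η / 2 ^ (j + 1)) ^ (-(n : ℝ))) := by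
      intro z hz
      obtain ⟨hz1, hz2⟩ := hz
      have h1 : ‖z‖ < η / 2 ^ j := mem_ball_zero_iff.1 hz1
      have h2 : η / 2 ^ (j + 1) ≤ ‖z‖ := by
        by_contra hc
        exact hz2 (mem_ball_zero_iff.2 (lt_of_not_ge hc))
      refine ENNReal.ofReal_le_ofReal ?_
      have hb : ‖z‖ ^ (-(n : ℝ)) ≤ (η / 2 ^ (j + 1)) ^ (-(n : ℝ)) :=
        Real.rpow_le_rpow_of_nonpos hrj1 h2 (neg_nonpos.2 (Nat.cast_nonneg n))
      exact mul_le_mul h1.le hb (Real.rpow_nonneg (norm_nonneg z) _) hrj.le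
    calc ∫⁻ z in D j, g z
        ≤ ∫⁻ _ in D j, ENNReal.ofReal (η / 2 ^ j * (η / 2 ^ (j + 1)) ^ (-(n : ℝ))) :=
          setLIntegral_mono' hDmeas hgb
      _ = ENNReal.ofReal (η / 2 ^ j * (η / 2 ^ (j + 1)) ^ (-(n : ℝ))) * volume (D j) :=
          setLIntegral_const _ _
      _ ≤ ENNReal.ofReal (η / 2 ^ j * (η / 2 ^ (j + 1)) ^ (-(n : ℝ))) *
            (ENNReal.ofReal ((η / 2 ^ j) ^ n) * V) := by
          refine mul_le_mul_right ?_ _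
          calc volume (D j) ≤ volume (ball (0:E) (η / 2 ^ j)) :=
                measure_mono diff_subset
            _ = ENNReal.ofReal ((η / 2 ^ j) ^ n) * V := by
                rw [Measure.addHaar_ball_of_pos volume (0:E) hrj, finrank_euclideanSpace_fin]
      _ = ENNReal.ofReal (η / 2 ^ j * (η / 2 ^ (j + 1)) ^ (-(n : ℝ)) * (η / 2 ^ j) ^ n) * V := by
          rw [← mul_assoc, ← ENNReal.ofReal_mul (by positivity)]
      _ = ENNReal.ofReal (η / 2 ^ j * 2 ^ n) * V := by
          congr 2
          have e1 : (η / 2 ^ (j + 1) : ℝ) ^ (-(n : ℝ)) = ((η / 2 ^ (j + 1)) ^ n)⁻¹ := by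
            rw [Real.rpow_neg hrj1.le, Real.rpow_natCast]
          rw [e1]
          have e2 : (η / 2 ^ j : ℝ) = 2 * (η / 2 ^ (j + 1)) := by
            field_simp; ring
          rw [e2, mul_pow]
          have hne : ((η / 2 ^ (j + 1)) : ℝ) ^ n ≠ 0 := by positivity
          field_simp
  calc ∫⁻ z in ball (0 : E) η, g z
      ≤ ∫⁻ z in ({0} : Set E) ∪ ⋃ j, D j, g z := lintegral_mono_set hcover
    _ ≤ (∫⁻ z in ({0} : Set E), g z) + ∫⁻ z in ⋃ j, D j, g z := lintegral_union_le _ _ _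
    _ ≤ 0 + ∑' j, ∫⁻ z in D j, g z := by
        rw [hsing]
        exact add_le_add_right (lintegral_iUnion_le _ _) _
    _ ≤ ∑' j, ENNReal.ofReal (η / 2 ^ j * 2 ^ n) * V := by
        rw [zero_add]; exact ENNReal.tsum_le_tsum hterm
    _ = ENNReal.ofReal (2 ^ (n + 1) * η) * V := by
        have e : ∀ j : ℕ, ENNReal.ofReal (η / 2 ^ j * 2 ^ n) * V
            = (ENNReal.ofReal (η * 2 ^ n) * V) * (2⁻¹ : ℝ≥0∞) ^ j := by
          intro j
          have : (η / 2 ^ j * 2 ^ n : ℝ) = (η * 2 ^ n) * (1 / 2) ^ j := by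
            rw [div_pow, one_pow]
            field_simp
          rw [this, ENNReal.ofReal_mul (by positivity), ENNReal.ofReal_pow (by norm_num)]
          have h12 : ENNReal.ofReal (1 / 2 : ℝ) = (2⁻¹ : ℝ≥0∞) := by
            rw [one_div, ENNReal.ofReal_inv_of_pos two_pos]
            norm_num
          rw [h12]; ring
        rw [tsum_congr e, ENNReal.tsum_mul_left, ENNReal.tsum_geometric,
          ENNReal.one_sub_inv_two]
        rw [inv_inv]
        have : ENNReal.ofReal (η * 2 ^ n) * V * 2 = ENNReal.ofReal (η * 2 ^ n) * 2 * V := by ring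
        rw [this]
        congr 1
        rw [show ((2:ℝ≥0∞)) = ENNReal.ofReal (2:ℝ) by simp, ← ENNReal.ofReal_mul (by positivity)]
        congr 1
        ring

/-- For a Calderón--Zygmund kernel `K` (size + Dini regularity) and `b ∈ C_c^1` supported
in `B(0,R₀)` with `‖∇b‖_∞ ≤ L`, the operator `[b,T] - [b,T_η]` is bounded from `L^p` to
`L^q` with norm at most `C η L (R₀+η)^{n/r}`; in particular its operator norm tends to `0`
as `η → 0⁺`. -/
theorem stmt3 (n : ℕ) (p q r : ℝ) (hq : 1 < q) (hpq : q < p)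
    (hr : 1 / r = 1 / q - 1 / p)
    (K : EuclideanSpace ℝ (Fin n) → EuclideanSpace ℝ (Fin n) → ℂ)
    (CK : ℝ) (hCK : 0 < CK)
    (hsize : ∀ x y, x ≠ y → ‖K x y‖ ≤ CK * ‖x - y‖ ^ (-(n : ℝ)))
    (ω : ℝ → ℝ) (hω0 : ∀ t, 0 ≤ ω t) (hωmono : MonotoneOn ω (Set.Ico 0 1))
    (hDini : IntegrableOn (fun t => ω t / t) (Set.Ioc 0 1) volume)
    (hreg : ∀ x x' y : EuclideanSpace ℝ (Fin n), x ≠ y → ‖x - x'‖ < ‖x - y‖ / 2 →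
      ‖K x y - K x' y‖ + ‖K y x - K y x'‖ ≤
        CK * ‖x - y‖ ^ (-(n : ℝ)) * ω (‖x - x'‖ / ‖x - y‖))
    (φ : ℝ → ℝ) (hφsmooth : ContDiff ℝ (⊤ : ℕ∞) φ) (hφ01 : ∀ t, 0 ≤ φ t ∧ φ t ≤ 1)
    (hφ1 : ∀ t ∈ Set.Icc (0 : ℝ) (1 / 2), φ t = 1)
    (hφ0 : ∀ t ∈ Set.Ici (1 : ℝ), φ t = 0)
    (b : EuclideanSpace ℝ (Fin n) → ℝ) (hb : ContDiff ℝ 1 b)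
    (hbc : HasCompactSupport b) (R0 : ℝ) (hR0 : 0 < R0)
    (hsupp : tsupport b ⊆ Metric.ball 0 R0)
    (L : ℝ) (hL : ∀ x, ‖fderiv ℝ b x‖ ≤ L) :
    (∃ C : ℝ, 0 < C ∧ ∀ η : ℝ, 0 < η → ∀ f : EuclideanSpace ℝ (Fin n) → ℂ,
      MemLp f (ENNReal.ofReal p) volume →
        eLpNorm (commDiff K φ b η f) (ENNReal.ofReal q) volume ≤
          ENNReal.ofReal (C * η * L * (R0 + η) ^ ((n : ℝ) / r)) *
            eLpNorm f (ENNReal.ofReal p) volume) ∧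
      Tendsto (fun η : ℝ =>
          ⨆ f : {f : EuclideanSpace ℝ (Fin n) → ℂ //
              MemLp f (ENNReal.ofReal p) volume ∧
                eLpNorm f (ENNReal.ofReal p) volume ≤ 1},
            eLpNorm (commDiff K φ b η f.1) (ENNReal.ofReal q) volume)
        (nhdsWithin 0 (Set.Ioi 0)) (nhds 0) := by
  classical
  have hL0 : 0 ≤ L := le_trans (norm_nonneg _) (hL 0)
  have hq0 : 0 < q := lt_trans one_pos hq
  have hp0 : 0 < p := lt_trans hq0 hpq
  have hp1 : 1 < p := lt_trans hq hpq
  have hrinv : 0 < 1 / r := by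
    rw [hr]
    have := one_div_lt_one_div_of_lt hq0 hpq
    linarith
  have hr0 : 0 < r := one_div_pos.1 hrinv
  set V := volume (ball (0 : EuclideanSpace ℝ (Fin n)) 1) with hVdef
  have hV0 : 0 < V := measure_ball_pos _ _ one_pos
  have hVtop : V ≠ ⊤ := measure_ball_lt_top.ne
  set W := V ^ (1 / r) with hWdef
  have hWtop : W ≠ ⊤ := (ENNReal.rpow_lt_top_of_nonneg hrinv.le hVtop).ne
  have hW0 : 0 < W := ENNReal.rpow_pos hV0 hVtop
  have hVt0 : 0 < V.toReal := ENNReal.toReal_pos hV0.ne' hVtop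
  have hWt0 : 0 < W.toReal := ENNReal.toReal_pos hW0.ne' hWtop
  set C : ℝ := CK * 2 ^ (n + 1) * V.toReal * W.toReal with hCdef
  have hC0 : 0 < C := by positivity
  -- main uniform bound
  have hmain : ∀ η : ℝ, 0 < η → ∀ f : EuclideanSpace ℝ (Fin n) → ℂ,
      MemLp f (ENNReal.ofReal p) volume →
        eLpNorm (commDiff K φ b η f) (ENNReal.ofReal q) volume ≤
          ENNReal.ofReal (C * η * L * (R0 + η) ^ ((n : ℝ) / r)) *
            eLpNorm f (ENNReal.ofReal p) volume := by
    intro η hη f hf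
    obtain ⟨f', hf'sm, hae⟩ : ∃ f' : EuclideanSpace ℝ (Fin n) → ℂ,
        StronglyMeasurable f' ∧ f =ᵐ[volume] f' :=
      ⟨hf.aestronglyMeasurable.mk f, hf.aestronglyMeasurable.stronglyMeasurable_mk,
        hf.aestronglyMeasurable.ae_eq_mk⟩
    have hf'meas : Measurable f' := hf'sm.measurable
    set h : EuclideanSpace ℝ (Fin n) → ℝ≥0∞ := fun y => (‖f' y‖₊ : ℝ≥0∞) with hhdef
    have hhmeas : Measurable h := hf'meas.enorm
    set G : EuclideanSpace ℝ (Fin n) → ℝ≥0∞ :=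
      (ball (0 : EuclideanSpace ℝ (Fin n)) η).indicator (fun z => ENNReal.ofReal (‖z‖ * ‖z‖ ^ (-(n : ℝ)))) with hGdef
    have hGmeas : Measurable G := by
      refine Measurable.indicator ?_ measurableSet_ball
      exact (measurable_norm.mul (measurable_norm.pow_const _)).ennreal_ofReal
    set k : EuclideanSpace ℝ (Fin n) → EuclideanSpace ℝ (Fin n) → ℝ≥0∞ := fun x y => G (x - y) with hkdef
    have hk : Measurable (Function.uncurry k) := hGmeas.comp (measurable_fst.sub measurable_snd)
    set c : ℝ≥0∞ := ENNReal.ofReal (L * CK) with hcdef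
    set A : ℝ≥0∞ := ∫⁻ z, G z with hAdef
    have hA : A ≤ ENNReal.ofReal (2 ^ (n + 1) * η) * V := by
      rw [hAdef, hGdef, lintegral_indicator measurableSet_ball]
      exact my_ker_int n hη
    have hrow : ∀ x, ∫⁻ y, k x y = A := fun x =>
      (Measure.measurePreserving_sub_left volume x).lintegral_comp hGmeas
    have hcol : ∀ y, ∫⁻ x, k x y = A := fun y =>
      (measurePreserving_sub_right volume y).lintegral_comp hGmeas
    set B := ball (0 : EuclideanSpace ℝ (Fin n)) (R0 + η) with hBdef
    set F : EuclideanSpace ℝ (Fin n) → ℝ≥0∞ := fun x => ∫⁻ y, k x y * h y with hFdef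
    have hF : Measurable F := by
      apply Measurable.lintegral_prod_right (f := fun x y => k x y * h y)
      exact hk.mul (hhmeas.comp measurable_snd)
    -- pointwise bound
    have hpt : ∀ x, (‖commDiff K φ b η f x‖₊ : ℝ≥0∞) ≤
        (c * F x) * B.indicator (fun _ => (1 : ℝ≥0∞)) x := by
      intro x
      have hcomm : commDiff K φ b η f x = commDiff K φ b η f' x := by
        refine integral_congr_ae (hae.mono fun y hy => ?_)
        simp only [hy]
      by_cases hxB : x ∈ B
      · have hB1 : B.indicator (fun _ => (1 : ℝ≥0∞)) x = 1 := indicator_of_mem hxB _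
        rw [hB1, mul_one]
        rw [hcomm]
        refine le_trans (enorm_integral_le_lintegral_enorm _) ?_
        rw [show c * F x = ∫⁻ y, c * (k x y * h y) from
          (lintegral_const_mul' c _ ENNReal.ofReal_ne_top).symm]
        refine lintegral_mono fun y => ?_
        rcases eq_or_ne y x with rfl | hyx
        · simp [sub_self]
        by_cases hd : dist x y < η
        · have hzball : x - y ∈ ball (0 : EuclideanSpace ℝ (Fin n)) η :=
            mem_ball_zero_iff.2 (by rw [← dist_eq_norm]; exact hd)
          have hkxy : k x y = ENNReal.ofReal (‖x - y‖ * ‖x - y‖ ^ (-(n : ℝ))) := by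
            rw [hkdef]; exact indicator_of_mem hzball _
          have habs : |b x - b y| ≤ L * ‖x - y‖ := by
            have := convex_univ.norm_image_sub_le_of_norm_fderiv_le
              (f := b) (fun z _ => (hb.differentiable one_ne_zero).differentiableAt)
              (fun z _ => hL z) (mem_univ y) (mem_univ x)
            simpa [Real.norm_eq_abs] using this
          have hKb : ‖K x y‖ ≤ CK * ‖x - y‖ ^ (-(n : ℝ)) := hsize x y hyx.symm
          have hφb : |φ (dist x y / η)| ≤ 1 :=
            abs_le.2 ⟨by linarith [(hφ01 (dist x y / η)).1], (hφ01 (dist x y / η)).2⟩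
          have hreal : ‖(((b x - b y : ℝ) : ℂ) * K x y *
                ((φ (dist x y / η) : ℝ) : ℂ)) * f' y‖ ≤
              (L * CK) * (‖x - y‖ * ‖x - y‖ ^ (-(n : ℝ))) * ‖f' y‖ := by
            rw [norm_mul, norm_mul, norm_mul, Complex.norm_real, Complex.norm_real,
              Real.norm_eq_abs, Real.norm_eq_abs]
            calc |b x - b y| * ‖K x y‖ * |φ (dist x y / η)| * ‖f' y‖
                ≤ (L * ‖x - y‖) * (CK * ‖x - y‖ ^ (-(n : ℝ))) * 1 * ‖f' y‖ := by
                  have h1 : (0:ℝ) ≤ ‖x - y‖ ^ (-(n : ℝ)) := Real.rpow_nonneg (norm_nonneg _) _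
                  have i1 : |b x - b y| * ‖K x y‖ ≤ (L * ‖x - y‖) * (CK * ‖x - y‖ ^ (-(n : ℝ))) :=
                    mul_le_mul habs hKb (norm_nonneg _) (mul_nonneg hL0 (norm_nonneg _))
                  have i2 : |b x - b y| * ‖K x y‖ * |φ (dist x y / η)| ≤
                      (L * ‖x - y‖) * (CK * ‖x - y‖ ^ (-(n : ℝ))) * 1 :=
                    mul_le_mul i1 hφb (abs_nonneg _) (by positivity)
                  exact mul_le_mul_of_nonneg_right i2 (norm_nonneg _)
              _ = (L * CK) * (‖x - y‖ * ‖x - y‖ ^ (-(n : ℝ))) * ‖f' y‖ := by ring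
          calc (‖(((b x - b y : ℝ) : ℂ) * K x y *
                ((φ (dist x y / η) : ℝ) : ℂ)) * f' y‖₊ : ℝ≥0∞)
              = ENNReal.ofReal ‖(((b x - b y : ℝ) : ℂ) * K x y *
                ((φ (dist x y / η) : ℝ) : ℂ)) * f' y‖ := (ofReal_norm _).symm
            _ ≤ ENNReal.ofReal ((L * CK) * (‖x - y‖ * ‖x - y‖ ^ (-(n : ℝ))) * ‖f' y‖) :=
                ENNReal.ofReal_le_ofReal hreal
            _ = c * (k x y * h y) := by
                rw [ENNReal.ofReal_mul (by positivity), ENNReal.ofReal_mul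
                  (mul_nonneg hL0 hCK.le), hkxy, hcdef, hhdef, show ENNReal.ofReal ‖f' y‖ = (‖f' y‖₊ : ℝ≥0∞) from ofReal_norm _,
                  mul_assoc]
        · have hφz : φ (dist x y / η) = 0 :=
            hφ0 _ ((one_le_div hη).2 (not_lt.1 hd))
          simp [hφz]
      · have hB0 : B.indicator (fun _ => (1 : ℝ≥0∞)) x = 0 := indicator_of_notMem hxB _
        have hxn : R0 + η ≤ ‖x‖ := by
          have := hxB
          rw [hBdef, mem_ball_zero_iff] at this
          exact not_lt.1 this
        have hbx : b x = 0 := by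
          apply image_eq_zero_of_notMem_tsupport
          intro hx
          have := hsupp hx
          rw [mem_ball_zero_iff] at this
          linarith
        have hzero : commDiff K φ b η f' x = 0 := by
          rw [commDiff]
          rw [show (fun y => (((b x - b y : ℝ) : ℂ) * K x y *
              ((φ (dist x y / η) : ℝ) : ℂ)) * f' y) = fun _ => (0 : ℂ) from ?_, integral_zero]
          funext y
          by_cases hd : dist x y < η
          · have hby : b y = 0 := by
              apply image_eq_zero_of_notMem_tsupport
              intro hy
              have h1 := hsupp hy
              rw [mem_ball_zero_iff] at h1
              have h2 : ‖x‖ - ‖y‖ ≤ dist x y := by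
                rw [dist_eq_norm]; exact norm_sub_norm_le _ _
              linarith
            rw [hbx, hby]
            simp
          · have hφz : φ (dist x y / η) = 0 :=
              hφ0 _ ((one_le_div hη).2 (not_lt.1 hd))
            rw [hφz]
            simp
        rw [hcomm, hzero]
        simp [hB0]
    -- assemble
    have hQ0 : ENNReal.ofReal q ≠ 0 := by
      simp only [ne_eq, ENNReal.ofReal_eq_zero, not_le]; linarith
    have hQt : ENNReal.ofReal q ≠ ⊤ := ENNReal.ofReal_ne_top
    have hP0 : ENNReal.ofReal p ≠ 0 := by
      simp only [ne_eq, ENNReal.ofReal_eq_zero, not_le]; linarith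
    have hPt : ENNReal.ofReal p ≠ ⊤ := ENNReal.ofReal_ne_top
    have hQr : (ENNReal.ofReal q).toReal = q := ENNReal.toReal_ofReal hq0.le
    have hPr : (ENNReal.ofReal p).toReal = p := ENNReal.toReal_ofReal hp0.le
    have hBmeas : MeasurableSet B := measurableSet_ball
    have hvolB : volume B = ENNReal.ofReal ((R0 + η) ^ n) * V := by
      rw [hBdef, Measure.addHaar_ball_of_pos volume _ (by linarith), finrank_euclideanSpace_fin]
    have hindr : ∫⁻ x, (B.indicator (fun _ => (1 : ℝ≥0∞)) x) ^ r = volume B := by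
      have e : ∀ x, (B.indicator (fun _ => (1 : ℝ≥0∞)) x) ^ r
          = B.indicator (fun _ => (1 : ℝ≥0∞)) x := by
        intro x
        by_cases hx : x ∈ B
        · simp [indicator_of_mem hx]
        · simp [indicator_of_notMem hx, ENNReal.zero_rpow_of_pos hr0]
      simp_rw [e]
      exact lintegral_indicator_one hBmeas
    have hSchur := my_schur volume k hk h hhmeas A (fun x => le_of_eq (hrow x))
      (fun y => le_of_eq (hcol y)) hp1
    have hHolder := ENNReal.lintegral_Lp_mul_le_Lq_mul_Lr (p := q) (q := p) (r := r)
      hq0 hpq (by rw [hr]; ring) volume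
      (f := fun x => c * F x) (g := B.indicator (fun _ => (1 : ℝ≥0∞)))
      ((hF.const_mul c).aemeasurable)
      ((measurable_const.indicator hBmeas).aemeasurable)
    have hLCK : 0 ≤ L * CK := mul_nonneg hL0 hCK.le
    calc eLpNorm (commDiff K φ b η f) (ENNReal.ofReal q) volume
        = (∫⁻ x, (‖commDiff K φ b η f x‖₊ : ℝ≥0∞) ^ q) ^ (1 / q) := by
          rw [eLpNorm_eq_lintegral_rpow_enorm_toReal hQ0 hQt, hQr]; rfl
      _ ≤ (∫⁻ x, ((fun x => c * F x) * B.indicator (fun _ => (1 : ℝ≥0∞))) x ^ q) ^ (1 / q) := by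
          refine ENNReal.rpow_le_rpow (lintegral_mono fun x => ?_) (by positivity)
          exact ENNReal.rpow_le_rpow (hpt x) hq0.le
      _ ≤ (∫⁻ x, (c * F x) ^ p) ^ (1 / p) *
            (∫⁻ x, (B.indicator (fun _ => (1 : ℝ≥0∞)) x) ^ r) ^ (1 / r) := hHolder
      _ = c * (∫⁻ x, F x ^ p) ^ (1 / p) * (volume B) ^ (1 / r) := by
          rw [hindr]
          congr 1
          simp_rw [ENNReal.mul_rpow_of_nonneg _ _ hp0.le]
          rw [lintegral_const_mul (c ^ p) (hF.pow_const p),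
            ENNReal.mul_rpow_of_nonneg _ _ (by positivity : (0:ℝ) ≤ 1 / p),
            ← ENNReal.rpow_mul, mul_one_div_cancel hp0.ne', ENNReal.rpow_one]
      _ ≤ c * (A * (∫⁻ y, h y ^ p) ^ (1 / p)) * (volume B) ^ (1 / r) := by
          refine mul_le_mul_left (mul_le_mul_right ?_ c) _
          calc (∫⁻ x, F x ^ p) ^ (1 / p) ≤ (A ^ p * ∫⁻ y, h y ^ p) ^ (1 / p) :=
                ENNReal.rpow_le_rpow hSchur (by positivity)
            _ = A * (∫⁻ y, h y ^ p) ^ (1 / p) := by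
                rw [ENNReal.mul_rpow_of_nonneg _ _ (by positivity : (0:ℝ) ≤ 1 / p),
                  ← ENNReal.rpow_mul, mul_one_div_cancel hp0.ne', ENNReal.rpow_one]
      _ = (c * A * (volume B) ^ (1 / r)) * eLpNorm f (ENNReal.ofReal p) volume := by
          have e : (∫⁻ y, h y ^ p) ^ (1 / p) = eLpNorm f (ENNReal.ofReal p) volume := by
            rw [eLpNorm_congr_ae hae, eLpNorm_eq_lintegral_rpow_enorm_toReal hP0 hPt, hPr]; rfl
          rw [e]; ring
      _ ≤ ENNReal.ofReal (C * η * L * (R0 + η) ^ ((n : ℝ) / r)) *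
            eLpNorm f (ENNReal.ofReal p) volume := by
          refine mul_le_mul_left ?_ _
          calc c * A * (volume B) ^ (1 / r)
              ≤ c * (ENNReal.ofReal (2 ^ (n + 1) * η) * V) *
                  ((ENNReal.ofReal ((R0 + η) ^ n) * V) ^ (1 / r)) := by
                rw [hvolB]
                exact mul_le_mul_left (mul_le_mul_right hA c) _
            _ = c * (ENNReal.ofReal (2 ^ (n + 1) * η) * V) *
                  (ENNReal.ofReal ((R0 + η) ^ ((n : ℝ) / r)) * W) := by
                congr 1
                rw [ENNReal.mul_rpow_of_nonneg _ _ hrinv.le, hWdef]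
                congr 1
                rw [ENNReal.ofReal_rpow_of_pos (by positivity),
                  ← Real.rpow_natCast (R0 + η) n, ← Real.rpow_mul (by linarith), mul_one_div]
            _ = ENNReal.ofReal ((L * CK) * ((2 ^ (n + 1) * η) * V.toReal) *
                  ((R0 + η) ^ ((n : ℝ) / r) * W.toReal)) := by
                rw [ENNReal.ofReal_mul (mul_nonneg hLCK (by positivity)),
                  ENNReal.ofReal_mul hLCK,
                  ENNReal.ofReal_mul (q := V.toReal) (by positivity),
                  ENNReal.ofReal_mul (q := W.toReal) (by positivity),
                  ENNReal.ofReal_toReal hVtop, ENNReal.ofReal_toReal hWtop, ← hcdef]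
            _ = ENNReal.ofReal (C * η * L * (R0 + η) ^ ((n : ℝ) / r)) := by
                congr 1
                rw [hCdef]
                ring
  refine ⟨⟨C, hC0, hmain⟩, ?_⟩
  -- part 2 : tendsto
  have hub : ∀ η ∈ Ioi (0:ℝ),
      (⨆ f : {f : EuclideanSpace ℝ (Fin n) → ℂ //
          MemLp f (ENNReal.ofReal p) volume ∧
            eLpNorm f (ENNReal.ofReal p) volume ≤ 1},
        eLpNorm (commDiff K φ b η f.1) (ENNReal.ofReal q) volume) ≤
      ENNReal.ofReal (C * η * L * (R0 + η) ^ ((n : ℝ) / r)) := by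
    intro η hη
    refine iSup_le fun f => ?_
    calc eLpNorm (commDiff K φ b η f.1) (ENNReal.ofReal q) volume
        ≤ ENNReal.ofReal (C * η * L * (R0 + η) ^ ((n : ℝ) / r)) *
            eLpNorm f.1 (ENNReal.ofReal p) volume := hmain η hη f.1 f.2.1
      _ ≤ ENNReal.ofReal (C * η * L * (R0 + η) ^ ((n : ℝ) / r)) * 1 :=
          mul_le_mul_right f.2.2 _
      _ = _ := mul_one _
  have hupper : Tendsto (fun η : ℝ => ENNReal.ofReal (C * η * L * (R0 + η) ^ ((n : ℝ) / r)))
      (nhdsWithin 0 (Ioi 0)) (nhds 0) := by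
    have hcont : ContinuousAt (fun η : ℝ => C * η * L * (R0 + η) ^ ((n : ℝ) / r)) 0 := by
      refine ContinuousAt.mul (ContinuousAt.mul (continuousAt_const.mul continuousAt_id)
        continuousAt_const) ?_
      have h1 : ContinuousAt (fun x : ℝ => x ^ ((n : ℝ) / r)) (R0 + 0) :=
        Real.continuousAt_rpow_const _ _ (Or.inl (by linarith))
      exact h1.comp ((continuous_const.add continuous_id).continuousAt)
    have h2 : Tendsto (fun η : ℝ => C * η * L * (R0 + η) ^ ((n : ℝ) / r))
        (nhds 0) (nhds 0) := by
      have := hcont.tendsto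
      simpa using this
    have h2' : Tendsto (fun η : ℝ => C * η * L * (R0 + η) ^ ((n : ℝ) / r))
        (nhdsWithin 0 (Ioi 0)) (nhds 0) := h2.mono_left nhdsWithin_le_nhds
    have h3 := (ENNReal.continuous_ofReal.tendsto 0).comp h2'
    rwa [ENNReal.ofReal_zero] at h3
  refine tendsto_of_tendsto_of_tendsto_of_le_of_le' tendsto_const_nhds hupper
    (Filter.Eventually.of_forall fun η => zero_le) ?_
  exact eventually_mem_nhdsWithin.mono hub
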